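/- Let λ ∈ ℂ, m ≥ 1 an integer, and R a p×p real matrix with nonnegative entries. Let rr be the 1×p row vector with rr_j := max_i R_{ij}, and let 1_p be the all-ones column vector of length p. Define real p×p matrices 𝖲₁, …, 𝖲_m by 𝖲₁ := R and 𝖲_{k+1} := |λ−k−1|·𝖲_k + |∏_{i=1}^{k}(λ−i)|·R + (1_p·rr)·𝖲_k for k = 1, …, m−1. Then for any p×p complex matrices B₁, …, B_m satisfying |B_i − (λ−i)·I_p| ≤ R entrywise for all i, one has | B_m·B_{m−1}·⋯·B₁ − (∏_{i=1}^{m}(λ−i))·I_p | ≤ 𝖲_m entrywise. -/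

import Mathlib

/-- The p×p matrix `1_p · rr`, where `rr_j = max_i R_{ij}`. -/
noncomputable def colMaxMat {p : ℕ} (R : Matrix (Fin p) (Fin p) ℝ) :
    Matrix (Fin p) (Fin p) ℝ :=
  Matrix.of fun _ j => ⨆ i, R i j

/-- The radius sequence 𝖲₁ := R,
`𝖲_{k+1} := |λ−k−1|·𝖲_k + |∏_{i=1}^{k}(λ−i)|·R + (1_p·rr)·𝖲_k` for k ≥ 1. -/
noncomputable def Sseq {p : ℕ} (lam : ℂ) (R : Matrix (Fin p) (Fin p) ℝ) :
    ℕ → Matrix (Fin p) (Fin p) ℝ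
  | 0 => R
  | 1 => R
  | (k + 2) => Norm.norm (lam - (k + 1) - 1) • Sseq lam R (k + 1) +
      Norm.norm (∏ i ∈ Finset.range (k + 1), (lam - (i + 1))) • R +
      colMaxMat R * Sseq lam R (k + 1)

/-!
Write `Bᵢ = (λ - i) I + Eᵢ` and `Pₖ = Bₖ ⋯ B₁ = cₖ I + Fₖ`
with `cₖ = ∏_{i ≤ k} (λ - i)`. Then
`Fₖ₊₁ = (λ - k - 1) Fₖ + cₖ Eₖ₊₁ + Eₖ₊₁ Fₖ`,
and bounding the three terms entrywise by `|λ - k - 1| 𝖲ₖ`, `|cₖ| R` and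
`|Eₖ₊₁| 𝖲ₖ ≤ R 𝖲ₖ ≤ (1_p rr) 𝖲ₖ` gives `|Fₖ₊₁| ≤ 𝖲ₖ₊₁` by induction on `k`.
-/

theorem List.prod_reverse_ofFn_succ {M : Type*} [Monoid M] {n : ℕ}
    (f : Fin (n + 1) → M) :
    (List.ofFn f).reverse.prod =
      f (Fin.last n) * (List.ofFn fun i => f i.castSucc).reverse.prod := by
  rw [List.ofFn_succ', List.concat_eq_append, List.reverse_concat', List.prod_cons]

theorem mul_sub_smul_one_eq {K A : Type*} [CommRing K] [Ring A] [Algebra K A]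
    (L P : A) (μ c : K) :
    L * P - (c * μ) • (1 : A) =
      μ • (P - c • 1) + c • (L - μ • 1) + (L - μ • 1) * (P - c • 1) := by
  simp only [sub_mul, mul_sub, smul_mul_assoc, mul_smul_comm, one_mul, mul_one, smul_smul,
    smul_sub]
  module

theorem Matrix.norm_mul_apply_le {𝕜 l m n : Type*} [SeminormedRing 𝕜] [Fintype m]
    {E : Matrix l m 𝕜} {F : Matrix m n 𝕜} {C : Matrix l m ℝ} {S : Matrix m n ℝ}
    (hE : ∀ a j, ‖E a j‖ ≤ C a j) (hF : ∀ j b, ‖F j b‖ ≤ S j b) (a : l) (b : n) :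
    ‖(E * F) a b‖ ≤ (C * S) a b :=
  calc ‖(E * F) a b‖ ≤ ∑ j, ‖E a j‖ * ‖F j b‖ :=
        norm_sum_le_of_le _ fun _ _ => norm_mul_le _ _
    _ ≤ (C * S) a b :=
        Finset.sum_le_sum fun j _ =>
          mul_le_mul (hE a j) (hF j b) (norm_nonneg _) ((norm_nonneg _).trans (hE a j))

theorem Matrix.norm_mul_sub_smul_one_apply_le {𝕜 n : Type*} [NormedCommRing 𝕜] [Fintype n]
    [DecidableEq n] {L P : Matrix n n 𝕜} {μ c : 𝕜} {R C S : Matrix n n ℝ}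
    (hL : ∀ a b, ‖(L - μ • 1) a b‖ ≤ R a b) (hRC : ∀ a b, R a b ≤ C a b)
    (hP : ∀ a b, ‖(P - c • 1) a b‖ ≤ S a b) (a b : n) :
    ‖(L * P - (c * μ) • 1) a b‖ ≤ ‖μ‖ * S a b + ‖c‖ * R a b + (C * S) a b := by
  rw [mul_sub_smul_one_eq, add_apply, add_apply, smul_apply, smul_apply]
  exact norm_add₃_le.trans <| add_le_add_three
    (norm_mul_le_of_le le_rfl (hP a b)) (norm_mul_le_of_le le_rfl (hL a b))
    (norm_mul_apply_le (fun a b => (hL a b).trans (hRC a b)) hP a b)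

theorem le_colMaxMat {p : ℕ} (R : Matrix (Fin p) (Fin p) ℝ) (i a j : Fin p) :
    R i j ≤ colMaxMat R a j :=
  le_ciSup (f := fun i => R i j) (Set.finite_range _).bddAbove i

theorem Sseq_add_two_apply {p : ℕ} (lam : ℂ) (R : Matrix (Fin p) (Fin p) ℝ) (k : ℕ)
    (a b : Fin p) :
    Sseq lam R (k + 2) a b = ‖lam - (k + 1) - 1‖ * Sseq lam R (k + 1) a b +
      ‖∏ i ∈ Finset.range (k + 1), (lam - (i + 1))‖ * R a b +
      (colMaxMat R * Sseq lam R (k + 1)) a b :=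
  rfl

theorem stmt_10_general {p : ℕ} (lam : ℂ) (m : ℕ) (hm : 1 ≤ m)
    (R : Matrix (Fin p) (Fin p) ℝ)
    (B : Fin m → Matrix (Fin p) (Fin p) ℂ)
    (hB : ∀ i : Fin m, ∀ a b, Norm.norm
      (B i a b - ((lam - ((i : ℕ) + 1)) • (1 : Matrix (Fin p) (Fin p) ℂ)) a b) ≤ R a b) :
    ∀ a b, Norm.norm
        (((List.ofFn B).reverse.prod) a b -
          ((∏ i ∈ Finset.range m, (lam - (i + 1))) • (1 : Matrix (Fin p) (Fin p) ℂ)) a b) ≤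
      Sseq lam R m a b := by
  induction m, hm using Nat.le_induction with
  | base => simpa [Sseq] using hB 0
  | succ k hk ih =>
    obtain ⟨n, rfl⟩ := Nat.exists_eq_add_of_le' hk
    have hP := ih (fun i => B i.castSucc) fun i => hB i.castSucc
    have hL := hB (Fin.last (n + 1))
    intro a b
    rw [List.prod_reverse_ofFn_succ, Finset.prod_range_succ, ← Matrix.sub_apply,
      Sseq_add_two_apply]
    refine (Matrix.norm_mul_sub_smul_one_apply_le hL (fun i j => le_colMaxMat R i i j) hP a b
      ).trans_eq ?_
    congr 4
    push_cast
    ring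

theorem stmt_10 {p : ℕ} (lam : ℂ) (m : ℕ) (hm : 1 ≤ m)
    (R : Matrix (Fin p) (Fin p) ℝ) (hR : ∀ i j, 0 ≤ R i j)
    (B : Fin m → Matrix (Fin p) (Fin p) ℂ)
    (hB : ∀ i : Fin m, ∀ a b, Norm.norm
      (B i a b - ((lam - ((i : ℕ) + 1)) • (1 : Matrix (Fin p) (Fin p) ℂ)) a b) ≤ R a b) :
    ∀ a b, Norm.norm
        (((List.ofFn B).reverse.prod) a b -
          ((∏ i ∈ Finset.range m, (lam - (i + 1))) • (1 : Matrix (Fin p) (Fin p) ℂ)) a b) ≤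
      Sseq lam R m a b :=
  stmt_10_general lam m hm R B hB
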